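/- arXiv:2210.16189 — 2 statements merged into one kernel-verified Lean document; each statement's English description precedes it below -/
import Mathlib

section
/- Let N ≥ 1, n ≥ 1 be integers, let p : Fin N → ℝ be a probability vector with p i > 0 for all i and ∑ i, p i = 1, and let I₁, …, I_n be i.i.d. random indices with P(I_k = i) = p i. Then for any vectors v : Fin N → ℝ^d, letting g = ∑_i v(i) and g̃ = (1/n) ∑_{k=1}^n (1/p(I_k)) • v(I_k), the pseudo-variance satisfies E[ ‖g̃ − g‖² ] = (1/n) ( ∑_i ‖v(i)‖²/p(i) − ‖∑_i v(i)‖² ). -/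
/-!
The estimator is the empirical mean of the i.i.d. vectors `X k = (p (I k))⁻¹ • v (I k)`, whose
mean is `g = ∑ i, v i` and whose second moment is `∑ i, ‖v i‖ ^ 2 / p i`. Since
`(1 / n) • ∑ k, X k - g = (1 / n) • ∑ k, (X k - g)` and independent centred vectors are orthogonal
in `L²` (the cross term `E⟪X k - g, X l - g⟫` factors as `⟪0, 0⟫`), the squared error has
expectation `n⁻² · n · (E‖X k‖² - ‖g‖²)`.
-/

open MeasureTheory ProbabilityTheory Finset
open scoped RealInnerProductSpace

section FiniteValued

variable {Ω α : Type*} [MeasurableSpace Ω] {μ : Measure Ω} [IsFiniteMeasure μ]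
  [MeasurableSpace α] {J : Ω → α}

theorem memLp_comp_of_finite [Finite α] [DiscreteMeasurableSpace α] {F : Type*}
    [NormedAddCommGroup F] (hJ : Measurable J) (f : α → F) (q : ENNReal) :
    MemLp (fun ω => f (J ω)) q μ :=
  MemLp.of_discrete.comp_of_map hJ.aemeasurable

theorem integral_comp_eq_sum_measureReal_smul [Fintype α] [MeasurableSingletonClass α]
    {F : Type*} [NormedAddCommGroup F] [NormedSpace ℝ F] [CompleteSpace F]
    (hJ : Measurable J) (f : α → F) :
    ∫ ω, f (J ω) ∂μ = ∑ a, μ.real (J ⁻¹' {a}) • f a := by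
  rw [← integral_map hJ.aemeasurable Integrable.of_finite.aestronglyMeasurable,
    integral_fintype .of_finite]
  simp_rw [map_measureReal_apply hJ (measurableSet_singleton _)]

end FiniteValued

section Hilbert

variable {Ω E : Type*} [MeasurableSpace Ω] {μ : Measure Ω}
  [NormedAddCommGroup E] [InnerProductSpace ℝ E] [CompleteSpace E]

theorem integral_norm_sub_integral_sq [IsProbabilityMeasure μ] {X : Ω → E} (hX : MemLp X 2 μ) :
    ∫ ω, ‖X ω - μ[X]‖ ^ 2 ∂μ = ∫ ω, ‖X ω‖ ^ 2 ∂μ - ‖μ[X]‖ ^ 2 := by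
  have hX1 : Integrable X μ := hX.integrable one_le_two
  have hX2 : Integrable (fun ω => ‖X ω‖ ^ 2) μ := hX.integrable_norm_pow two_ne_zero
  simp_rw [norm_sub_sq_real]
  have hcross : Integrable (fun ω => 2 * ⟪X ω, μ[X]⟫) μ := (hX1.inner_const _).const_mul 2
  rw [integral_add (f := fun ω => ‖X ω‖ ^ 2 - 2 * ⟪X ω, μ[X]⟫) (hX2.sub hcross)
      (integrable_const _), integral_sub hX2 hcross,
    integral_const_mul]
  simp_rw [real_inner_comm (μ[X])]
  rw [integral_inner hX1, real_inner_self_eq_norm_sq, integral_const, probReal_univ, one_smul]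
  ring

variable [MeasurableSpace E] [BorelSpace E]

theorem integral_norm_sum_sq_of_pairwise_indepFun [IsFiniteMeasure μ] {ι : Type*} [Fintype ι]
    {Y : ι → Ω → E} (hY : ∀ k, MemLp (Y k) 2 μ) (hindep : Pairwise fun k l => Y k ⟂ᵢ[μ] Y l)
    (hmean : ∀ k, μ[Y k] = 0) :
    ∫ ω, ‖∑ k, Y k ω‖ ^ 2 ∂μ = ∑ k, ∫ ω, ‖Y k ω‖ ^ 2 ∂μ := by
  have hint : ∀ k l, Integrable (fun ω => ⟪Y k ω, Y l ω⟫) μ := fun k l =>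
    memLp_one_iff_integrable.1 ((innerSL ℝ).memLp_of_bilin 1 (hY k) (hY l))
  have horth : ∀ k l, k ≠ l → ∫ ω, ⟪Y k ω, Y l ω⟫ ∂μ = 0 := fun k l hkl =>
    ((hindep hkl).integral_bilin ((hY k).integrable one_le_two) ((hY l).integrable one_le_two)
      (innerSL ℝ)).trans (by simp [hmean])
  simp_rw [← real_inner_self_eq_norm_sq, sum_inner, inner_sum]
  rw [integral_finsetSum _ fun k _ => integrable_finsetSum _ fun l _ => hint k l]
  refine sum_congr rfl fun k _ => ?_
  rw [integral_finsetSum _ fun l _ => hint k l]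
  exact sum_eq_single k (fun l _ hlk => horth k l hlk.symm) (by simp)

theorem integral_norm_smul_sum_sub_sq_of_pairwise_indepFun [IsProbabilityMeasure μ]
    {ι : Type*} [Fintype ι] [Nonempty ι] {X : ι → Ω → E} (hX : ∀ k, MemLp (X k) 2 μ)
    (hindep : Pairwise fun k l => X k ⟂ᵢ[μ] X l) {m : E} {s : ℝ} (hmean : ∀ k, μ[X k] = m)
    (hsecond : ∀ k, ∫ ω, ‖X k ω‖ ^ 2 ∂μ = s) :
    ∫ ω, ‖(1 / (Fintype.card ι : ℝ)) • ∑ k, X k ω - m‖ ^ 2 ∂μ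
      = (1 / (Fintype.card ι : ℝ)) * (s - ‖m‖ ^ 2) := by
  have hc : (Fintype.card ι : ℝ) ≠ 0 := Nat.cast_ne_zero.2 Fintype.card_ne_zero
  have hcenter : ∀ ω, (1 / (Fintype.card ι : ℝ)) • ∑ k, X k ω - m
      = (1 / (Fintype.card ι : ℝ)) • ∑ k, (X k ω - m) := fun ω => by
    rw [sum_sub_distrib, sum_const, card_univ, smul_sub, ← Nat.cast_smul_eq_nsmul ℝ, smul_smul,
      one_div_mul_cancel hc, one_smul]
  have hvar : ∀ k, ∫ ω, ‖X k ω - m‖ ^ 2 ∂μ = s - ‖m‖ ^ 2 := fun k => by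
    rw [← hmean k, integral_norm_sub_integral_sq (hX k), hsecond]
  have hsum := integral_norm_sum_sq_of_pairwise_indepFun (μ := μ) (Y := fun k ω => X k ω - m)
    (fun k => (hX k).sub (memLp_const m))
    (fun k l hkl => (hindep hkl).comp (continuous_sub_right m).measurable
      (continuous_sub_right m).measurable)
    (fun k => by simp [integral_sub ((hX k).integrable one_le_two) (integrable_const m), hmean])
  simp_rw [hcenter, norm_smul, mul_pow, integral_const_mul, hsum, hvar, sum_const, card_univ,
    nsmul_eq_mul, Real.norm_eq_abs, sq_abs]
  field_simp

end Hilbert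

theorem pseudoVariance_preferential_subsampling_general
    {N n d : ℕ} (hn : 1 ≤ n)
    {Ω : Type*} [MeasurableSpace Ω] (μ : Measure Ω) [IsProbabilityMeasure μ]
    (I : Fin n → Ω → Fin N)
    (hmeas : ∀ k, Measurable (I k))
    (hindep : iIndepFun I μ)
    (p : Fin N → ℝ) (hp : ∀ i, 0 < p i)
    (hlaw : ∀ k i, μ (I k ⁻¹' {i}) = ENNReal.ofReal (p i))
    (v : Fin N → EuclideanSpace ℝ (Fin d)) :
    ∫ ω, ‖(1 / (n : ℝ)) • (∑ k, (p (I k ω))⁻¹ • v (I k ω)) - ∑ i, v i‖ ^ 2 ∂μ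
      = (1 / (n : ℝ)) * ((∑ i, ‖v i‖ ^ 2 / p i) - ‖∑ i, v i‖ ^ 2) := by
  have : Nonempty (Fin n) := ⟨⟨0, hn⟩⟩
  have hlaw_real : ∀ k i, μ.real (I k ⁻¹' {i}) = p i := fun k i => by
    rw [measureReal_def, hlaw, ENNReal.toReal_ofReal (hp i).le]
  have hmean : ∀ k, ∫ ω, (p (I k ω))⁻¹ • v (I k ω) ∂μ = ∑ i, v i := fun k => by
    rw [integral_comp_eq_sum_measureReal_smul (hmeas k) fun i => (p i)⁻¹ • v i]
    simp [hlaw_real, smul_smul, (hp _).ne']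
  have hsecond : ∀ k, ∫ ω, ‖(p (I k ω))⁻¹ • v (I k ω)‖ ^ 2 ∂μ = ∑ i, ‖v i‖ ^ 2 / p i :=
    fun k => by
    rw [integral_comp_eq_sum_measureReal_smul (hmeas k) fun i => ‖(p i)⁻¹ • v i‖ ^ 2]
    refine sum_congr rfl fun i _ => ?_
    rw [hlaw_real, norm_smul, Real.norm_eq_abs, abs_inv, abs_of_pos (hp i), smul_eq_mul]
    field_simp [(hp i).ne']
  have := integral_norm_smul_sum_sub_sq_of_pairwise_indepFun
    (fun k => memLp_comp_of_finite (hmeas k) (fun i => (p i)⁻¹ • v i) 2)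
    (fun k l hkl => (hindep.indepFun hkl).comp (φ := fun i => (p i)⁻¹ • v i)
      (ψ := fun i => (p i)⁻¹ • v i) (measurable_of_finite _) (measurable_of_finite _))
    hmean hsecond
  rwa [Fintype.card_fin] at this

/-- Pseudo-variance of the preferentially subsampled (importance-weighted)
gradient estimator built from `n` i.i.d. indices drawn with replacement. -/
theorem pseudoVariance_preferential_subsampling
    {N n d : ℕ} (hN : 1 ≤ N) (hn : 1 ≤ n)
    {Ω : Type*} [MeasurableSpace Ω] (μ : Measure Ω) [IsProbabilityMeasure μ]
    (I : Fin n → Ω → Fin N)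
    (hmeas : ∀ k, Measurable (I k))
    (hindep : iIndepFun I μ)
    (p : Fin N → ℝ) (hp : ∀ i, 0 < p i) (hsum : ∑ i, p i = 1)
    (hlaw : ∀ k i, μ (I k ⁻¹' {i}) = ENNReal.ofReal (p i))
    (v : Fin N → EuclideanSpace ℝ (Fin d)) :
    ∫ ω, ‖(1 / (n : ℝ)) • (∑ k, (p (I k ω))⁻¹ • v (I k ω)) - ∑ i, v i‖ ^ 2 ∂μ
      = (1 / (n : ℝ)) * ((∑ i, ‖v i‖ ^ 2 / p i) - ‖∑ i, v i‖ ^ 2) :=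
  pseudoVariance_preferential_subsampling_general hn μ I hmeas hindep p hp hlaw v
end

section
/- Let N ≥ 1 and let u, w : Fin N → ℝ^d satisfy u(i) ≠ w(i) for all i. Define p*(i) = ‖u(i) − w(i)‖ / ∑_{k=1}^N ‖u(k) − w(k)‖. Then p* is a probability vector with strictly positive entries, ∑_{i} ‖u(i) − w(i)‖²/p*(i) = ( ∑_{i} ‖u(i) − w(i)‖ )², and for every probability vector p with p i > 0 and ∑ i, p i = 1 one has ∑_{i} ‖u(i) − w(i)‖²/p*(i) ≤ ∑_{i} ‖u(i) − w(i)‖²/p(i). -/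
/-!
With `aᵢ = ‖uᵢ - wᵢ‖ > 0` and `S = ∑ aᵢ`, the weights `p*ᵢ = aᵢ / S` turn each term
`aᵢ² / p*ᵢ` into `aᵢ S`, so the objective equals `S²`; for any probability vector `p`,
Cauchy–Schwarz in Sedrakyan's form gives `S² = S² / ∑ pᵢ ≤ ∑ aᵢ² / pᵢ`.
-/

open Finset

section

variable {R ι : Type*} [Semifield R] [Fintype ι]

lemma sq_div_div_eq_mul (a S : R) : a ^ 2 / (a / S) = a * S := by
  rcases eq_or_ne a 0 with rfl | _
  · simp
  · field_simp

lemma sum_div_sum_eq_one (a : ι → R) (h : ∑ k, a k ≠ 0) :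
    ∑ i, a i / ∑ k, a k = 1 := by
  rw [← sum_div, div_self h]

lemma sum_sq_div_div_sum (a : ι → R) :
    ∑ i, a i ^ 2 / (a i / ∑ k, a k) = (∑ i, a i) ^ 2 := by
  simp_rw [sq_div_div_eq_mul, ← sum_mul, sq]

lemma sq_sum_le_sum_sq_div_of_sum_eq_one [LinearOrder R] [IsStrictOrderedRing R]
    [ExistsAddOfLE R] (a p : ι → R) (hp : ∀ i, 0 < p i)
    (hp1 : ∑ i, p i = 1) : (∑ i, a i) ^ 2 ≤ ∑ i, a i ^ 2 / p i := by
  simpa [hp1] using sq_sum_div_le_sum_sq_div univ a fun i _ => hp i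

end

/-- Lemma 3.2: for the control-variate estimator, the subsampling weights
proportional to `‖u i − w i‖` form a probability vector that minimises the
pseudo-variance objective `∑ i, ‖u i − w i‖² / p i`, attaining the value
`(∑ i, ‖u i − w i‖)²`. -/
theorem optimal_weights_sgld_cv_ps
    {N d : ℕ} (hN : 1 ≤ N)
    (u w : Fin N → EuclideanSpace ℝ (Fin d)) (huw : ∀ i, u i ≠ w i)
    (pstar : Fin N → ℝ)
    (hpstar : ∀ i, pstar i = ‖u i - w i‖ / ∑ k, ‖u k - w k‖) :
    (∀ i, 0 < pstar i) ∧ (∑ i, pstar i = 1) ∧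
      (∑ i, ‖u i - w i‖ ^ 2 / pstar i = (∑ i, ‖u i - w i‖) ^ 2) ∧
      (∀ p : Fin N → ℝ, (∀ i, 0 < p i) → ∑ i, p i = 1 →
        ∑ i, ‖u i - w i‖ ^ 2 / pstar i ≤ ∑ i, ‖u i - w i‖ ^ 2 / p i) := by
  obtain rfl : pstar = fun i => ‖u i - w i‖ / ∑ k, ‖u k - w k‖ := funext hpstar
  have ha : ∀ i, 0 < ‖u i - w i‖ := fun i => norm_pos_iff.mpr (sub_ne_zero.mpr (huw i))
  have : Nonempty (Fin N) := ⟨⟨0, hN⟩⟩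
  have hS : 0 < ∑ k, ‖u k - w k‖ := sum_pos (fun i _ => ha i) univ_nonempty
  have hval := sum_sq_div_div_sum fun i => ‖u i - w i‖
  refine ⟨fun i => div_pos (ha i) hS, sum_div_sum_eq_one _ hS.ne', hval, ?_⟩
  intro p hp hp1
  exact hval ▸ sq_sum_le_sum_sq_div_of_sum_eq_one _ p hp hp1
end
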